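/- For p = (x,y,z) in the simplex not a vertex, the operator norm of M_p restricted to the plane L = {u+v+w=0} with respect to the ℓ¹-norm equals 1 - χ(p), where χ(p) = min{x/(x+y), y/(x+y), x/(x+z), z/(x+z), y/(y+z), z/(y+z)}. -/

import Mathlib

open Matrix

noncomputable def Mp (p : Fin 3 → ℝ) : Matrix (Fin 3) (Fin 3) ℝ :=
  !![0, p 2 / (p 0 + p 2), p 1 / (p 0 + p 1);
     p 2 / (p 1 + p 2), 0, p 0 / (p 0 + p 1);
     p 1 / (p 1 + p 2), p 0 / (p 0 + p 2), 0]

/-- The ℓ¹-norm on `ℝ³`. -/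
def l1 (v : Fin 3 → ℝ) : ℝ := |v 0| + |v 1| + |v 2|

/-- The quantity `χ(p)`. -/
noncomputable def chi (x y z : ℝ) : ℝ :=
  min (min (x / (x + y)) (y / (x + y)))
    (min (min (x / (x + z)) (z / (x + z))) (min (y / (y + z)) (z / (y + z))))

private lemma absdiff (u v m : ℝ) (hu : m ≤ u) (hv : m ≤ v) : |u - v| ≤ u + v - 2*m := by
  rcases abs_cases (u - v) with ⟨h, _⟩ | ⟨h, _⟩ <;> linarith

private lemma combo (a b m A0 A1 A2 B0 B1 B2 M0 M1 M2 : ℝ) (ha : 0 ≤ a) (hb : 0 ≤ b)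
    (hab : a + b = 1/2)
    (h0 : M0 = a*A0 + b*B0) (h1 : M1 = a*A1 + b*B1) (h2 : M2 = a*A2 + b*B2)
    (hA : |A0| + |A1| + |A2| ≤ 2 - 2*m) (hB : |B0| + |B1| + |B2| ≤ 2 - 2*m) :
    |M0| + |M1| + |M2| ≤ 1 - m := by
  have t0 : |M0| ≤ a*|A0| + b*|B0| := by
    rw [h0]
    calc |a*A0 + b*B0| ≤ |a*A0| + |b*B0| := abs_add_le _ _
      _ = a*|A0| + b*|B0| := by rw [abs_mul, abs_mul, abs_of_nonneg ha, abs_of_nonneg hb]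
  have t1 : |M1| ≤ a*|A1| + b*|B1| := by
    rw [h1]
    calc |a*A1 + b*B1| ≤ |a*A1| + |b*B1| := abs_add_le _ _
      _ = a*|A1| + b*|B1| := by rw [abs_mul, abs_mul, abs_of_nonneg ha, abs_of_nonneg hb]
  have t2 : |M2| ≤ a*|A2| + b*|B2| := by
    rw [h2]
    calc |a*A2 + b*B2| ≤ |a*A2| + |b*B2| := abs_add_le _ _
      _ = a*|A2| + b*|B2| := by rw [abs_mul, abs_mul, abs_of_nonneg ha, abs_of_nonneg hb]
  have u1 : a*(|A0| + |A1| + |A2|) ≤ a*(2 - 2*m) := mul_le_mul_of_nonneg_left hA ha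
  have u2 : b*(|B0| + |B1| + |B2|) ≤ b*(2 - 2*m) := mul_le_mul_of_nonneg_left hB hb
  have hm : a*m + b*m = m/2 := by rw [← add_mul, hab]; ring
  nlinarith [t0, t1, t2, u1, u2, hm]

set_option maxHeartbeats 1000000 in
/-- The operator norm of `M_p` restricted to the plane `L = {u+v+w = 0}` with
respect to the ℓ¹-norm equals `1 - χ(p)`. -/
theorem stmt6 (x y z : ℝ) (hx : 0 ≤ x) (hy : 0 ≤ y) (hz : 0 ≤ z)
    (hxy : 0 < x + y) (hxz : 0 < x + z) (hyz : 0 < y + z)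
    (hsum : x + y + z = 1) :
    IsLUB {t : ℝ | ∃ r : Fin 3 → ℝ, r 0 + r 1 + r 2 = 0 ∧ l1 r = 1 ∧
        t = l1 ((Mp ![x, y, z]).mulVec r)}
      (1 - chi x y z) := by
  have s01 : x/(x+y) + y/(x+y) = 1 := by rw [← add_div, div_self hxy.ne']
  have s02 : x/(x+z) + z/(x+z) = 1 := by rw [← add_div, div_self hxz.ne']
  have s12 : y/(y+z) + z/(y+z) = 1 := by rw [← add_div, div_self hyz.ne']
  have n1 : 0 ≤ x/(x+y) := div_nonneg hx hxy.le
  have n2 : 0 ≤ y/(x+y) := div_nonneg hy hxy.le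
  have n3 : 0 ≤ x/(x+z) := div_nonneg hx hxz.le
  have n4 : 0 ≤ z/(x+z) := div_nonneg hz hxz.le
  have n5 : 0 ≤ y/(y+z) := div_nonneg hy hyz.le
  have n6 : 0 ≤ z/(y+z) := div_nonneg hz hyz.le
  have c1 : chi x y z ≤ x/(x+y) := le_trans (min_le_left _ _) (min_le_left _ _)
  have c2 : chi x y z ≤ y/(x+y) := le_trans (min_le_left _ _) (min_le_right _ _)
  have c3 : chi x y z ≤ x/(x+z) :=
    le_trans (min_le_right _ _) (le_trans (min_le_left _ _) (min_le_left _ _))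
  have c4 : chi x y z ≤ z/(x+z) :=
    le_trans (min_le_right _ _) (le_trans (min_le_left _ _) (min_le_right _ _))
  have c5 : chi x y z ≤ y/(y+z) :=
    le_trans (min_le_right _ _) (le_trans (min_le_right _ _) (min_le_left _ _))
  have c6 : chi x y z ≤ z/(y+z) :=
    le_trans (min_le_right _ _) (le_trans (min_le_right _ _) (min_le_right _ _))
  have evalr : ∀ r : Fin 3 → ℝ, l1 ((Mp ![x, y, z]).mulVec r) =
      |z/(x+z) * r 1 + y/(x+y) * r 2| + |z/(y+z) * r 0 + x/(x+y) * r 2|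
        + |y/(y+z) * r 0 + x/(x+z) * r 1| := fun r => by
    simp [l1, Mp, Matrix.mulVec, dotProduct, Fin.sum_univ_three, vecHead, vecTail]
  -- three canonical cases of the upper bound
  have kC : ∀ a b c : ℝ, a + b + c = 0 → |a| + |b| + |c| = 1 → 0 ≤ a → 0 ≤ b →
      |z/(x+z) * b + y/(x+y) * c| + |z/(y+z) * a + x/(x+y) * c|
        + |y/(y+z) * a + x/(x+z) * b| ≤ 1 - chi x y z := by
    intro a b c h0 h1 ha hb
    have hcc : c = -a - b := by linarith
    have hcn : c ≤ 0 := by linarith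
    have hab : a + b = 1/2 := by
      rw [abs_of_nonneg ha, abs_of_nonneg hb, abs_of_nonpos hcn] at h1; linarith
    refine combo a b (chi x y z) (-(y/(x+y))) (z/(y+z) - x/(x+y)) (y/(y+z))
      (z/(x+z) - y/(x+y)) (-(x/(x+y))) (x/(x+z)) _ _ _ ha hb hab ?_ ?_ ?_ ?_ ?_
    · rw [hcc]; ring
    · rw [hcc]; ring
    · ring
    · rw [abs_neg, abs_of_nonneg n2, abs_of_nonneg n5]
      have := absdiff (z/(y+z)) (x/(x+y)) _ c6 c1; linarith
    · rw [abs_neg, abs_of_nonneg n1, abs_of_nonneg n3]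
      have := absdiff (z/(x+z)) (y/(x+y)) _ c4 c2; linarith
  have kB : ∀ a b c : ℝ, a + b + c = 0 → |a| + |b| + |c| = 1 → 0 ≤ a → 0 ≤ c →
      |z/(x+z) * b + y/(x+y) * c| + |z/(y+z) * a + x/(x+y) * c|
        + |y/(y+z) * a + x/(x+z) * b| ≤ 1 - chi x y z := by
    intro a b c h0 h1 ha hc
    have hbb : b = -a - c := by linarith
    have hbn : b ≤ 0 := by linarith
    have hab : a + c = 1/2 := by
      rw [abs_of_nonneg ha, abs_of_nonpos hbn, abs_of_nonneg hc] at h1; linarith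
    refine combo a c (chi x y z) (-(z/(x+z))) (z/(y+z)) (y/(y+z) - x/(x+z))
      (y/(x+y) - z/(x+z)) (x/(x+y)) (-(x/(x+z))) _ _ _ ha hc hab ?_ ?_ ?_ ?_ ?_
    · rw [hbb]; ring
    · ring
    · rw [hbb]; ring
    · rw [abs_neg, abs_of_nonneg n4, abs_of_nonneg n6]
      have := absdiff (y/(y+z)) (x/(x+z)) _ c5 c3; linarith
    · rw [abs_neg, abs_of_nonneg n1, abs_of_nonneg n3]
      have := absdiff (y/(x+y)) (z/(x+z)) _ c2 c4; linarith
  have kA : ∀ a b c : ℝ, a + b + c = 0 → |a| + |b| + |c| = 1 → 0 ≤ b → 0 ≤ c →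
      |z/(x+z) * b + y/(x+y) * c| + |z/(y+z) * a + x/(x+y) * c|
        + |y/(y+z) * a + x/(x+z) * b| ≤ 1 - chi x y z := by
    intro a b c h0 h1 hb hc
    have haa : a = -b - c := by linarith
    have han : a ≤ 0 := by linarith
    have hab : b + c = 1/2 := by
      rw [abs_of_nonpos han, abs_of_nonneg hb, abs_of_nonneg hc] at h1; linarith
    refine combo b c (chi x y z) (z/(x+z)) (-(z/(y+z))) (x/(x+z) - y/(y+z))
      (y/(x+y)) (x/(x+y) - z/(y+z)) (-(y/(y+z))) _ _ _ hb hc hab ?_ ?_ ?_ ?_ ?_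
    · ring
    · rw [haa]; ring
    · rw [haa]; ring
    · rw [abs_neg, abs_of_nonneg n4, abs_of_nonneg n6]
      have := absdiff (x/(x+z)) (y/(y+z)) _ c3 c5; linarith
    · rw [abs_neg, abs_of_nonneg n2, abs_of_nonneg n5]
      have := absdiff (x/(x+y)) (z/(y+z)) _ c1 c6; linarith
  have key : ∀ a b c : ℝ, a + b + c = 0 → |a| + |b| + |c| = 1 →
      |z/(x+z) * b + y/(x+y) * c| + |z/(y+z) * a + x/(x+y) * c|
        + |y/(y+z) * a + x/(x+z) * b| ≤ 1 - chi x y z := by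
    intro a b c h0 h1
    rcases le_total 0 a with ha | ha <;> rcases le_total 0 b with hb | hb <;>
      rcases le_total 0 c with hc | hc
    · rw [abs_of_nonneg ha, abs_of_nonneg hb, abs_of_nonneg hc] at h1; linarith
    · exact kC a b c h0 h1 ha hb
    · exact kB a b c h0 h1 ha hc
    · have := kA (-a) (-b) (-c) (by linarith)
        (by rw [abs_neg, abs_neg, abs_neg]; exact h1) (by linarith) (by linarith)
      rw [show z/(x+z) * -b + y/(x+y) * -c = -(z/(x+z) * b + y/(x+y) * c) by ring,
        show z/(y+z) * -a + x/(x+y) * -c = -(z/(y+z) * a + x/(x+y) * c) by ring,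
        show y/(y+z) * -a + x/(x+z) * -b = -(y/(y+z) * a + x/(x+z) * b) by ring,
        abs_neg, abs_neg, abs_neg] at this
      exact this
    · exact kA a b c h0 h1 hb hc
    · have := kB (-a) (-b) (-c) (by linarith)
        (by rw [abs_neg, abs_neg, abs_neg]; exact h1) (by linarith) (by linarith)
      rw [show z/(x+z) * -b + y/(x+y) * -c = -(z/(x+z) * b + y/(x+y) * c) by ring,
        show z/(y+z) * -a + x/(x+y) * -c = -(z/(y+z) * a + x/(x+y) * c) by ring,
        show y/(y+z) * -a + x/(x+z) * -b = -(y/(y+z) * a + x/(x+z) * b) by ring,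
        abs_neg, abs_neg, abs_neg] at this
      exact this
    · have := kC (-a) (-b) (-c) (by linarith)
        (by rw [abs_neg, abs_neg, abs_neg]; exact h1) (by linarith) (by linarith)
      rw [show z/(x+z) * -b + y/(x+y) * -c = -(z/(x+z) * b + y/(x+y) * c) by ring,
        show z/(y+z) * -a + x/(x+y) * -c = -(z/(y+z) * a + x/(x+y) * c) by ring,
        show y/(y+z) * -a + x/(x+z) * -b = -(y/(y+z) * a + x/(x+z) * b) by ring,
        abs_neg, abs_neg, abs_neg] at this
      exact this
    · rw [abs_of_nonpos ha, abs_of_nonpos hb, abs_of_nonpos hc] at h1; linarith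
  constructor
  · rintro t ⟨r, h0, h1, rfl⟩
    rw [evalr]
    exact key (r 0) (r 1) (r 2) h0 h1
  · intro b hb
    have half : (0:ℝ) ≤ 1/2 := by norm_num
    have m01 : (1 - min (y/(y+z)) (x/(x+z))) ∈ {t : ℝ | ∃ r : Fin 3 → ℝ,
        r 0 + r 1 + r 2 = 0 ∧ l1 r = 1 ∧ t = l1 ((Mp ![x, y, z]).mulVec r)} := by
      refine ⟨![1/2, -(1/2), 0], by norm_num [Matrix.cons_val_two, Matrix.tail_cons], by norm_num [l1, abs_of_nonneg half, Matrix.cons_val_two, Matrix.tail_cons], ?_⟩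
      rw [evalr]
      simp only [Matrix.cons_val_zero, Matrix.cons_val_one, Matrix.head_cons,
        Matrix.cons_val_two, Matrix.tail_cons, mul_zero, add_zero, zero_add, mul_neg]
      rw [abs_neg, abs_of_nonneg (mul_nonneg n4 half), abs_of_nonneg (mul_nonneg n6 half)]
      rcases le_total (y/(y+z)) (x/(x+z)) with h | h
      · rw [min_eq_left h, abs_of_nonpos (by linarith :
          y/(y+z) * (1/2) + -(x/(x+z) * (1/2)) ≤ 0)]
        linarith
      · rw [min_eq_right h, abs_of_nonneg (by linarith :
          (0:ℝ) ≤ y/(y+z) * (1/2) + -(x/(x+z) * (1/2)))]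
        linarith
    have m02 : (1 - min (z/(y+z)) (x/(x+y))) ∈ {t : ℝ | ∃ r : Fin 3 → ℝ,
        r 0 + r 1 + r 2 = 0 ∧ l1 r = 1 ∧ t = l1 ((Mp ![x, y, z]).mulVec r)} := by
      refine ⟨![1/2, 0, -(1/2)], by norm_num [Matrix.cons_val_two, Matrix.tail_cons], by norm_num [l1, abs_of_nonneg half, Matrix.cons_val_two, Matrix.tail_cons], ?_⟩
      rw [evalr]
      simp only [Matrix.cons_val_zero, Matrix.cons_val_one, Matrix.head_cons,
        Matrix.cons_val_two, Matrix.tail_cons, mul_zero, add_zero, zero_add, mul_neg]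
      rw [abs_neg, abs_of_nonneg (mul_nonneg n2 half), abs_of_nonneg (mul_nonneg n5 half)]
      rcases le_total (z/(y+z)) (x/(x+y)) with h | h
      · rw [min_eq_left h, abs_of_nonpos (by linarith :
          z/(y+z) * (1/2) + -(x/(x+y) * (1/2)) ≤ 0)]
        linarith
      · rw [min_eq_right h, abs_of_nonneg (by linarith :
          (0:ℝ) ≤ z/(y+z) * (1/2) + -(x/(x+y) * (1/2)))]
        linarith
    have m12 : (1 - min (z/(x+z)) (y/(x+y))) ∈ {t : ℝ | ∃ r : Fin 3 → ℝ,
        r 0 + r 1 + r 2 = 0 ∧ l1 r = 1 ∧ t = l1 ((Mp ![x, y, z]).mulVec r)} := by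
      refine ⟨![0, 1/2, -(1/2)], by norm_num [Matrix.cons_val_two, Matrix.tail_cons], by norm_num [l1, abs_of_nonneg half, Matrix.cons_val_two, Matrix.tail_cons], ?_⟩
      rw [evalr]
      simp only [Matrix.cons_val_zero, Matrix.cons_val_one, Matrix.head_cons,
        Matrix.cons_val_two, Matrix.tail_cons, mul_zero, add_zero, zero_add, mul_neg]
      rw [abs_neg, abs_of_nonneg (mul_nonneg n1 half), abs_of_nonneg (mul_nonneg n3 half)]
      rcases le_total (z/(x+z)) (y/(x+y)) with h | h
      · rw [min_eq_left h, abs_of_nonpos (by linarith :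
          z/(x+z) * (1/2) + -(y/(x+y) * (1/2)) ≤ 0)]
        linarith
      · rw [min_eq_right h, abs_of_nonneg (by linarith :
          (0:ℝ) ≤ z/(x+z) * (1/2) + -(y/(x+y) * (1/2)))]
        linarith
    have hmin : min (min (y/(y+z)) (x/(x+z)))
        (min (min (z/(y+z)) (x/(x+y))) (min (z/(x+z)) (y/(x+y)))) = chi x y z := by
      unfold chi
      apply le_antisymm <;> simp [le_min_iff, min_le_iff]
    rw [← hmin]
    rcases min_cases (min (y/(y+z)) (x/(x+z)))
        (min (min (z/(y+z)) (x/(x+y))) (min (z/(x+z)) (y/(x+y)))) with ⟨h', _⟩ | ⟨h', _⟩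
    · rw [h']; exact hb m01
    · rw [h']
      rcases min_cases (min (z/(y+z)) (x/(x+y))) (min (z/(x+z)) (y/(x+y))) with
        ⟨h'', _⟩ | ⟨h'', _⟩
      · rw [h'']; exact hb m02
      · rw [h'']; exact hb m12
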